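/- arXiv:2203.03406 — 2 statements merged into one kernel-verified Lean document; each statement's English description precedes it below -/
import Mathlib

section
/- Let n and k be positive integers, and let u and v be distinct vertices of the Kneser graph K(2n+k,n) with s = |u ∩ v|. If (⌈(n-1)/(2k)⌉ - 1)·k + 1 ≤ s ≤ (⌈(n-1)/(2k)⌉ - 1)·k + 1 + H(n,k), then dist(u,v) = diam(K(2n+k,n)). -/
/-- The Kneser graph `K(m, n)`: vertices are the `n`-element subsets of an `m`-element
ground set, with edges between disjoint sets. -/
def KneserGraph (m n : ℕ) : SimpleGraph {s : Finset (Fin m) // s.card = n} where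
  Adj u v := Disjoint u.1 v.1 ∧ u ≠ v
  symm := ⟨fun u v ⟨h, hne⟩ => ⟨h.symm, hne.symm⟩⟩
  loopless := ⟨fun u ⟨_, h⟩ => h rfl⟩

/-- The geodetic interval `I[u,v]`: all vertices lying on some shortest `u,v`-path. -/
def geodInterval {V : Type*} (G : SimpleGraph V) (u v : V) : Set V :=
  {w | G.dist u w + G.dist w v = G.dist u v}

/-- `I[W] = ⋃_{u,v ∈ W} I[u,v]`. -/
def geodIntervalSet {V : Type*} (G : SimpleGraph V) (W : Set V) : Set V :=
  ⋃ (u ∈ W) (v ∈ W), geodInterval G u v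

/-- `W` is a geodetic set if `I[W] = V(G)`. -/
def IsGeodeticSet {V : Type*} (G : SimpleGraph V) (W : Set V) : Prop :=
  geodIntervalSet G W = Set.univ

/-- `W` is geodetically convex if `I[W] = W`. -/
def IsGConvex {V : Type*} (G : SimpleGraph V) (W : Set V) : Prop :=
  geodIntervalSet G W = W

/-- The geodetic hull `H[W]`: the smallest g-convex set containing `W`. -/
def geodHull {V : Type*} (G : SimpleGraph V) (W : Set V) : Set V :=
  ⋂₀ {C | IsGConvex G C ∧ W ⊆ C}

/-- `W` is a geodetic hull set if `H[W] = V(G)`. -/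
def IsGeodHullSet {V : Type*} (G : SimpleGraph V) (W : Set V) : Prop :=
  geodHull G W = Set.univ

/-- The geodetic number: minimum cardinality of a geodetic set. -/
noncomputable def geodeticNumber {V : Type*} (G : SimpleGraph V) : ℕ :=
  sInf {m | ∃ W : Set V, IsGeodeticSet G W ∧ W.ncard = m}

/-- The geodetic hull number: minimum cardinality of a geodetic hull set. -/
noncomputable def geodHullNumber {V : Type*} (G : SimpleGraph V) : ℕ :=
  sInf {m | ∃ W : Set V, IsGeodHullSet G W ∧ W.ncard = m}

/-- The function `H(n,k)` from the paper. -/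
def Hfun (n k : ℕ) : ℕ := if n % k ≤ 1 then n % k + k - 2 else n % k - 2

/-- `p = (⌈(n-1)/(2k)⌉ - 1)·k + 1`, computed in `ℤ`. -/
def pInt (n k : ℕ) : ℤ := (⌈((n : ℚ) - 1) / (2 * k)⌉ - 1) * k + 1

/-!
Consecutive vertices u, w of a walk towards v are disjoint, so
`n - k ≤ |u ∩ v| + |w ∩ v| ≤ n`. Hence a walk of length `2j` from `u` to `v` forces
`n ≤ |u ∩ v| + jk` and one of length `2j + 1` forces `|u ∩ v| ≤ jk`; conversely, greedily
chosen walks realise these bounds. With `c = ⌈(n - 1)/k⌉` every pair of vertices is therefore at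
distance at most `c + 1`. With `q = ⌈(n - 1)/(2k)⌉` we have `c ≤ 2q ≤ c + 1`, and since
`H(n,k) = n + k - 2 - ck` the hypotheses say exactly `(q - 1)k < |u ∩ v| < n - (c - q)k`,
which excludes every walk from `u` to `v` of length at most `c`.
-/

open Finset SimpleGraph

namespace KneserGraph

variable {n k : ℕ} {u v w : {s : Finset (Fin (2 * n + k)) // s.card = n}}

lemma card_inter_le (u v : {s : Finset (Fin (2 * n + k)) // s.card = n}) : #(u.1 ∩ v.1) ≤ n :=
  (card_le_card inter_subset_left).trans_eq u.2

lemma eq_of_le_card_inter (h : n ≤ #(u.1 ∩ v.1)) : u = v := by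
  have huv : u.1 ∩ v.1 = u.1 := eq_of_subset_of_card_le inter_subset_left (by rw [u.2]; exact h)
  exact Subtype.ext (eq_of_subset_of_card_le (inter_eq_left.mp huv) (by rw [u.2, v.2]))

lemma edist_le_one_of_disjoint (h : Disjoint u.1 v.1) :
    (KneserGraph (2 * n + k) n).edist u v ≤ 1 := by
  rw [edist_le_one_iff_adj_or_eq]
  by_cases huv : u = v
  · exact .inr huv
  · exact .inl ⟨h, huv⟩

lemma card_compl_union_of_disjoint (h : Disjoint u.1 w.1) : #(u.1 ∪ w.1)ᶜ = k := by
  rw [card_compl, card_union_of_disjoint h, u.2, w.2, Fintype.card_fin]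
  omega

lemma card_inter_add_card_inter_le (h : Disjoint u.1 w.1) :
    #(u.1 ∩ v.1) + #(w.1 ∩ v.1) ≤ n := by
  rw [← card_union_of_disjoint (h.mono inter_subset_left inter_subset_left)]
  exact (card_le_card (union_subset inter_subset_right inter_subset_right)).trans_eq v.2

lemma le_card_inter_add_card_inter_add (h : Disjoint u.1 w.1) :
    n ≤ #(u.1 ∩ v.1) + #(w.1 ∩ v.1) + k := by
  have hsplit := card_inter_add_card_sdiff v.1 (u.1 ∪ w.1)
  rw [inter_union_distrib_left, inter_comm v.1, inter_comm v.1, v.2] at hsplit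
  have hout : #(v.1 \ (u.1 ∪ w.1)) ≤ k :=
    (card_le_card fun a ha => mem_compl.mpr (mem_sdiff.mp ha).2).trans_eq
      (card_compl_union_of_disjoint h)
  have := card_union_le (u.1 ∩ v.1) (w.1 ∩ v.1)
  omega

lemma exists_disjoint_card_inter_eq (t : ℕ) (ht : t + #(u.1 ∩ v.1) ≤ n)
    (ht' : n ≤ t + #(u.1 ∩ v.1) + k) :
    ∃ x : {s : Finset (Fin (2 * n + k)) // s.card = n}, Disjoint u.1 x.1 ∧ #(x.1 ∩ v.1) = t := by
  have hvu : #(v.1 \ u.1) = n - #(u.1 ∩ v.1) := by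
    have := card_sdiff_add_card_inter v.1 u.1
    rw [v.2, inter_comm] at this
    omega
  have hout : #(u.1 ∪ v.1)ᶜ = k + #(u.1 ∩ v.1) := by
    have hunion := card_union_add_card_inter u.1 v.1
    rw [u.2, v.2] at hunion
    rw [card_compl, Fintype.card_fin]
    omega
  obtain ⟨A, hA, hAcard⟩ := exists_subset_card_eq (s := v.1 \ u.1) (n := t) (by omega)
  obtain ⟨B, hB, hBcard⟩ :=
    exists_subset_card_eq (s := (u.1 ∪ v.1)ᶜ) (n := n - t) (by omega)
  have hAv : A ⊆ v.1 := hA.trans sdiff_subset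
  have hBv : Disjoint B v.1 := disjoint_left.mpr fun a ha => by
    simpa using (mem_compl.mp (hB ha)) ∘ mem_union_right _
  have hAB : Disjoint A B := disjoint_of_subset_left hAv hBv.symm
  refine ⟨⟨A ∪ B, by rw [card_union_of_disjoint hAB, hAcard, hBcard]; omega⟩, ?_, ?_⟩
  · refine disjoint_union_right.mpr ⟨disjoint_of_subset_right hA disjoint_sdiff, ?_⟩
    exact disjoint_of_subset_right hB (disjoint_compl_right.mono_left subset_union_left)
  · rw [union_inter_distrib_right, inter_eq_left.mpr hAv, disjoint_iff_inter_eq_empty.mp hBv,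
      union_empty, hAcard]

lemma edist_le_two_mul_add_one_of_forall {j : ℕ}
    (heven : ∀ x y : {s : Finset (Fin (2 * n + k)) // s.card = n},
      n ≤ #(x.1 ∩ y.1) + j * k → (KneserGraph (2 * n + k) n).edist x y ≤ 2 * j)
    (h : #(u.1 ∩ v.1) ≤ j * k) : (KneserGraph (2 * n + k) n).edist u v ≤ 2 * j + 1 := by
  have := card_inter_le u v
  obtain ⟨x, hux, hxv⟩ := exists_disjoint_card_inter_eq (u := u) (v := v) (n - #(u.1 ∩ v.1))
    (by omega) (by omega)
  refine (SimpleGraph.edist_triangle (v := x)).trans ?_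
  rw [add_comm _ (1 : ℕ∞)]
  exact add_le_add (edist_le_one_of_disjoint hux) (heven x v (by omega))

lemma edist_le_two_mul (j : ℕ) (h : n ≤ #(u.1 ∩ v.1) + j * k) :
    (KneserGraph (2 * n + k) n).edist u v ≤ 2 * j := by
  induction j generalizing u v with
  | zero => simp [eq_of_le_card_inter (by simpa using h)]
  | succ j ih =>
    have := card_inter_le u v
    obtain ⟨x, hux, hxv⟩ := exists_disjoint_card_inter_eq (u := u) (v := v)
      (n - (#(u.1 ∩ v.1) + k)) (by omega) (by omega)
    rw [add_one_mul] at h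
    have hodd := edist_le_two_mul_add_one_of_forall (fun _ _ => ih) (u := x) (v := v)
      (by rw [hxv]; omega)
    refine (SimpleGraph.edist_triangle (v := x)).trans ?_
    rw [show (2 * (j + 1 : ℕ) : ℕ∞) = 1 + (2 * j + 1) by push_cast; ring]
    exact add_le_add (edist_le_one_of_disjoint hux) hodd

lemma edist_le_two_mul_add_one (j : ℕ) (h : #(u.1 ∩ v.1) ≤ j * k) :
    (KneserGraph (2 * n + k) n).edist u v ≤ 2 * j + 1 :=
  edist_le_two_mul_add_one_of_forall (fun _ _ => edist_le_two_mul j) h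

lemma card_inter_bounds_of_walk (p : (KneserGraph (2 * n + k) n).Walk u v) (j : ℕ) :
    (p.length = 2 * j → n ≤ #(u.1 ∩ v.1) + j * k) ∧
    (p.length = 2 * j + 1 → #(u.1 ∩ v.1) ≤ j * k) := by
  induction p generalizing j with
  | @nil w => exact ⟨fun _ => by rw [inter_self, w.2]; omega, fun h => by simp at h⟩
  | @cons u w v hadj p ih =>
    have hle := card_inter_add_card_inter_le (v := v) hadj.1
    have hge := le_card_inter_add_card_inter_add (v := v) hadj.1
    rw [Walk.length_cons]
    constructor
    · intro hlen
      obtain ⟨i, rfl⟩ : ∃ i, j = i + 1 := ⟨j - 1, by omega⟩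
      have := (ih i).2 (by omega)
      rw [add_mul, one_mul]
      omega
    · intro hlen
      have := (ih j).1 (by omega)
      omega

lemma ediam_le (c : ℕ) (hc : n ≤ c * k + 1) : (KneserGraph (2 * n + k) n).ediam ≤ c + 1 := by
  refine ediam_le_of_edist_le fun x y => ?_
  obtain ⟨j, rfl | rfl⟩ := Nat.even_or_odd' c
  · by_cases h : #(x.1 ∩ y.1) ≤ j * k
    · exact_mod_cast edist_le_two_mul_add_one j h
    · refine (edist_le_two_mul j ?_).trans (by norm_num)
      rw [mul_assoc] at hc
      omega
  · by_cases h : n ≤ #(x.1 ∩ y.1) + (j + 1) * k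
    · refine (edist_le_two_mul (j + 1) h).trans_eq (by push_cast; ring)
    · refine (edist_le_two_mul_add_one j ?_).trans (by push_cast; norm_num)
      rw [add_mul, mul_assoc, one_mul] at hc
      rw [add_mul, one_mul] at h
      omega

lemma le_edist {c q : ℕ} (hcq : c ≤ 2 * q) (hqc : 2 * q ≤ c + 1)
    (hq : q * k < #(u.1 ∩ v.1) + k) (hc : #(u.1 ∩ v.1) + c * k < n + q * k) :
    c + 1 ≤ (KneserGraph (2 * n + k) n).edist u v := by
  rw [edist_eq_sInf]
  refine le_sInf (Set.forall_mem_range.mpr fun p => ?_)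
  suffices c + 1 ≤ p.length by exact_mod_cast this
  obtain ⟨j, hj | hj⟩ := Nat.even_or_odd' p.length
  · have := (card_inter_bounds_of_walk p j).1 hj
    have : c < j + q := Nat.lt_of_mul_lt_mul_right (a := k) (by rw [add_mul]; omega)
    omega
  · have := (card_inter_bounds_of_walk p j).2 hj
    have : q < j + 1 := Nat.lt_of_mul_lt_mul_right (a := k) (by rw [add_mul, one_mul]; omega)
    omega

end KneserGraph

/-- The hypotheses say `c = ⌈(n - 1) / k⌉`. -/
lemma Hfun_add_mul {n k c : ℕ} (hk : 0 < k) (hc₁ : n ≤ c * k + 1)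
    (hc₂ : c * k + 1 < n + k) : Hfun n k + c * k = n + k - 2 := by
  unfold Hfun
  have hdiv := Nat.div_add_mod' n k
  have hmod := Nat.mod_lt n hk
  generalize n / k = d at hdiv
  generalize n % k = r at hdiv hmod ⊢
  have hlo : d < c + 2 := Nat.lt_of_mul_lt_mul_right (a := k) (by rw [add_mul]; omega)
  have hhi : c < d + 2 := Nat.lt_of_mul_lt_mul_right (a := k) (by rw [add_mul]; omega)
  have hc_succ := add_one_mul c k
  have hd_succ := add_one_mul d k
  obtain rfl | rfl | rfl : d = c + 1 ∨ d = c ∨ c = d + 1 := by omega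
  all_goals split_ifs <;> omega

lemma ceil_sub_one_div_bounds (n k : ℕ) (hk : 0 < k) :
    (n : ℤ) ≤ ⌈((n : ℚ) - 1) / (2 * k)⌉ * (2 * k) + 1 ∧
      ⌈((n : ℚ) - 1) / (2 * k)⌉ * (2 * k) + 1 < n + 2 * k := by
  set Q := ⌈((n : ℚ) - 1) / (2 * k)⌉
  have h2k : (0 : ℚ) < 2 * k := by positivity
  have hle := (div_le_iff₀ h2k).mp (Int.le_ceil (((n : ℚ) - 1) / (2 * k)))
  have hlt := (lt_div_iff₀ h2k).mp
    (sub_lt_iff_lt_add.mpr (Int.ceil_lt_add_one (((n : ℚ) - 1) / (2 * k))))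
  constructor
  · exact_mod_cast (by linarith : (n : ℚ) ≤ Q * (2 * k) + 1)
  · exact_mod_cast (by linarith : (Q : ℚ) * (2 * k) + 1 < n + 2 * k)

lemma exists_nat_of_pInt_le_of_le_pInt_add_Hfun {n k c s : ℕ} (hk : 0 < k)
    (hc₁ : n ≤ c * k + 1) (hc₂ : c * k + 1 < n + k) (h1 : pInt n k ≤ s)
    (h2 : s ≤ pInt n k + Hfun n k) :
    ∃ q : ℕ, c ≤ 2 * q ∧ 2 * q ≤ c + 1 ∧ q * k < s + k ∧ s + c * k < n + q * k := by
  obtain ⟨hQ₁, hQ₂⟩ := ceil_sub_one_div_bounds n k hk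
  set Q := ⌈((n : ℚ) - 1) / (2 * k)⌉
  have hp : pInt n k = (Q - 1) * k + 1 := rfl
  have hH : (Hfun n k : ℤ) + c * k = n + k - 2 := by
    have := Hfun_add_mul hk hc₁ hc₂
    omega
  have hk' : (0 : ℤ) < k := by exact_mod_cast hk
  zify at hc₁ hc₂
  have hcQ : (c : ℤ) < 2 * Q + 1 :=
    lt_of_mul_lt_mul_right (a := (k : ℤ)) (by linarith) hk'.le
  have hQc : 2 * Q < c + 2 :=
    lt_of_mul_lt_mul_right (a := (k : ℤ)) (by linarith) hk'.le
  have hQ : ((Q.toNat : ℕ) : ℤ) = Q := Int.toNat_of_nonneg (by omega)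
  refine ⟨Q.toNat, ?_, ?_, ?_, ?_⟩ <;> zify <;> rw [hQ]
  · omega
  · omega
  · linarith
  · linarith

open KneserGraph in
theorem dist_eq_diam_of_intersection_bounds_general
    (n k : ℕ) (hn : 0 < n) (hk : 0 < k)
    (u v : {s : Finset (Fin (2 * n + k)) // s.card = n})
    (s : ℕ) (hs : s = (u.1 ∩ v.1).card)
    (h1 : pInt n k ≤ (s : ℤ))
    (h2 : (s : ℤ) ≤ pInt n k + (Hfun n k : ℤ)) :
    (KneserGraph (2 * n + k) n).dist u v = (KneserGraph (2 * n + k) n).diam := by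
  subst hs
  obtain ⟨c, hc₁, hc₂⟩ : ∃ c, n ≤ c * k + 1 ∧ c * k + 1 < n + k := by
    refine ⟨(n + k - 2) / k, ?_⟩
    have := Nat.div_add_mod' (n + k - 2) k
    have := Nat.mod_lt (n + k - 2) hk
    omega
  obtain ⟨q, hcq, hqc, hq₁, hq₂⟩ :=
    exists_nat_of_pInt_le_of_le_pInt_add_Hfun hk hc₁ hc₂ h1 h2
  have hdiam := ediam_le c hc₁
  have hdist := le_edist hcq hqc hq₁ hq₂
  exact congrArg ENat.toNat (le_antisymm edist_le_ediam (hdiam.trans hdist))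

theorem dist_eq_diam_of_intersection_bounds
    (n k : ℕ) (hn : 0 < n) (hk : 0 < k)
    (u v : {s : Finset (Fin (2 * n + k)) // s.card = n}) (huv : u ≠ v)
    (s : ℕ) (hs : s = (u.1 ∩ v.1).card)
    (h1 : pInt n k ≤ (s : ℤ))
    (h2 : (s : ℤ) ≤ pInt n k + (Hfun n k : ℤ)) :
    (KneserGraph (2 * n + k) n).dist u v = (KneserGraph (2 * n + k) n).diam :=
  dist_eq_diam_of_intersection_bounds_general n k hn hk u v s hs h1 h2
end

section
/- Let n and k be positive integers, and let u and v be distinct vertices of the Kneser graph K(2n+k,n). If |u ∩ v| < (⌈(n-1)/(2k)⌉ - 1)·k + 1, then dist(u,v) is odd. -/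
/-! Along an edge `u ~ b` of `K(2n+k, n)` the sets `u ∩ v` and `b ∩ v` are disjoint and miss at
most the `k` points outside `u ∪ b`, so `n - k ≤ |u ∩ v| + |b ∩ v| ≤ n`. Iterating along a walk
from `u` to `v`, a walk of even length `2r` forces `n ≤ |u ∩ v| + r k`. Conversely, two steps
`u ~ a ~ b` with `a ⊇ v \ u` lower the intersection with `v` by `k`, so `|u ∩ v| ≤ t k` yields a
walk of length at most `2t + 1`. For `t = ⌈(n-1)/(2k)⌉ - 1` we have `2tk < n`, hence no walk of
even length is that short and the distance is odd. -/

lemma Finset.exists_subset_card_eq_card_inter_le {α : Type*} [DecidableEq α] {c t : Finset α}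
    {n : ℕ} (hn : n ≤ c.card) :
    ∃ b ⊆ c, b.card = n ∧ (b ∩ t).card ≤ n - (c \ t).card := by
  rcases le_total n (c \ t).card with hle | hle
  · obtain ⟨b, hb, hbn⟩ := Finset.exists_subset_card_eq hle
    have : b ∩ t = ∅ := Finset.eq_empty_of_forall_notMem fun x hx =>
      (Finset.mem_sdiff.mp (hb (Finset.mem_inter.mp hx).1)).2 (Finset.mem_inter.mp hx).2
    exact ⟨b, hb.trans Finset.sdiff_subset, hbn, by simp [this]⟩
  · obtain ⟨b, hcb, hb, hbn⟩ := Finset.exists_subsuperset_card_eq Finset.sdiff_subset hle hn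
    refine ⟨b, hb, hbn, ?_⟩
    have hsub : b ∩ t ⊆ b \ (c \ t) := fun x hx => by
      simp only [Finset.mem_inter, Finset.mem_sdiff] at hx ⊢
      exact ⟨hx.1, fun h => h.2 hx.2⟩
    calc (b ∩ t).card ≤ (b \ (c \ t)).card := Finset.card_le_card hsub
      _ = n - (c \ t).card := by rw [Finset.card_sdiff_of_subset hcb, hbn]

namespace KneserGraph

variable {m n k : ℕ}

lemma adj_iff (hn : 0 < n) {u v : {s : Finset (Fin m) // s.card = n}} :
    (KneserGraph m n).Adj u v ↔ Disjoint u.1 v.1 := by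
  refine ⟨And.left, fun huv => ⟨huv, ?_⟩⟩
  rintro rfl
  rw [disjoint_self, Finset.bot_eq_empty, ← Finset.card_eq_zero, u.2] at huv
  omega

lemma card_compl (u : {s : Finset (Fin (2 * n + k)) // s.card = n}) : (u.1ᶜ).card = n + k := by
  rw [Finset.card_compl, Fintype.card_fin, u.2]
  omega

lemma exists_adj_sdiff_subset (hn : 0 < n) (u v : {s : Finset (Fin (2 * n + k)) // s.card = n}) :
    ∃ a, (KneserGraph (2 * n + k) n).Adj u a ∧ v.1 \ u.1 ⊆ a.1 := by
  have hvu : v.1 \ u.1 ⊆ u.1ᶜ := fun x hx => Finset.mem_compl.mpr (Finset.mem_sdiff.mp hx).2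
  obtain ⟨a, hva, hau, ha⟩ := Finset.exists_subsuperset_card_eq hvu
    ((Finset.card_le_card Finset.sdiff_subset).trans_eq v.2) (by rw [card_compl]; omega)
  exact ⟨⟨a, ha⟩, (adj_iff hn).mpr (Finset.subset_compl_iff_disjoint_left.mp hau), hva⟩

lemma exists_adj_card_inter_le (hn : 0 < n) (a v : {s : Finset (Fin (2 * n + k)) // s.card = n}) :
    ∃ b, (KneserGraph (2 * n + k) n).Adj a b ∧ (b.1 ∩ v.1).card ≤ (a.1 ∪ v.1).card - (n + k) := by
  obtain ⟨b, hba, hb, hbv⟩ :=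
    Finset.exists_subset_card_eq_card_inter_le (t := v.1)
      ((Nat.le_add_right n k).trans_eq (card_compl a).symm)
  refine ⟨⟨b, hb⟩, (adj_iff hn).mpr (Finset.subset_compl_iff_disjoint_left.mp hba), ?_⟩
  have hcompl : (a.1ᶜ \ v.1).card = 2 * n + k - (a.1 ∪ v.1).card := by
    rw [Finset.sdiff_eq_inter_compl, ← Finset.compl_union, Finset.card_compl, Fintype.card_fin]
  have := (a.1 ∪ v.1).card_le_univ
  rw [Fintype.card_fin] at this
  show (b ∩ v.1).card ≤ _
  omega

lemma exists_adj_adj_card_inter_le (hn : 0 < n)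
    (u v : {s : Finset (Fin (2 * n + k)) // s.card = n}) :
    ∃ a b, (KneserGraph (2 * n + k) n).Adj u a ∧ (KneserGraph (2 * n + k) n).Adj a b ∧
      (b.1 ∩ v.1).card ≤ (u.1 ∩ v.1).card - k := by
  obtain ⟨a, hua, hva⟩ := exists_adj_sdiff_subset hn u v
  obtain ⟨b, hab, hbv⟩ := exists_adj_card_inter_le hn a v
  have hav : a.1 ∪ v.1 ⊆ a.1 ∪ (u.1 ∩ v.1) := fun x hx => by grind
  have := (Finset.card_le_card hav).trans (Finset.card_union_le _ _)
  rw [a.2] at this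
  exact ⟨a, b, hua, hab, by omega⟩

variable {u v b : {s : Finset (Fin (2 * n + k)) // s.card = n}}

lemma card_inter_add_card_inter_le_s2 (hub : (KneserGraph (2 * n + k) n).Adj u b) :
    (u.1 ∩ v.1).card + (b.1 ∩ v.1).card ≤ n := by
  rw [← Finset.card_union_of_disjoint
      (hub.1.mono Finset.inter_subset_left Finset.inter_subset_left),
    ← Finset.union_inter_distrib_right]
  exact (Finset.card_le_card Finset.inter_subset_right).trans_eq v.2

lemma le_card_inter_add_card_inter (hub : (KneserGraph (2 * n + k) n).Adj u b) :
    n ≤ (u.1 ∩ v.1).card + (b.1 ∩ v.1).card + k := by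
  rw [← Finset.card_union_of_disjoint
      (hub.1.mono Finset.inter_subset_left Finset.inter_subset_left),
    ← Finset.union_inter_distrib_right]
  have hcompl : ((u.1 ∪ b.1)ᶜ).card = k := by
    rw [Finset.card_compl, Fintype.card_fin, Finset.card_union_of_disjoint hub.1, u.2, b.2]; omega
  calc n = v.1.card := v.2.symm
    _ ≤ ((u.1 ∪ b.1) ∩ v.1).card + ((u.1 ∪ b.1)ᶜ).card := by
      rw [← Finset.card_sdiff_add_card_inter v.1 (u.1 ∪ b.1), Finset.inter_comm, add_comm]
      gcongr
      exact fun x hx => Finset.mem_compl.mpr (Finset.mem_sdiff.mp hx).2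
    _ = _ := by rw [hcompl]

lemma walk_length_bound (p : (KneserGraph (2 * n + k) n).Walk u v) :
    (Even p.length → n ≤ (u.1 ∩ v.1).card + p.length / 2 * k) ∧
    (Odd p.length → (u.1 ∩ v.1).card ≤ p.length / 2 * k) := by
  induction p with
  | @nil w => simp [w.2]
  | @cons a b c hab p ih =>
    have hupper := card_inter_add_card_inter_le_s2 (v := c) hab
    have hlower := le_card_inter_add_card_inter (v := c) hab
    rw [SimpleGraph.Walk.length_cons, Nat.even_add_one, Nat.odd_add_one, Nat.not_even_iff_odd,
      Nat.not_odd_iff_even]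
    refine ⟨fun hodd => ?_, fun heven => ?_⟩
    · obtain ⟨r, hr⟩ := hodd
      have := ih.2 ⟨r, hr⟩
      rw [hr] at this ⊢
      rw [show (2 * r + 1) / 2 = r by omega] at this
      rw [show (2 * r + 1 + 1) / 2 = r + 1 by omega, add_mul, one_mul]
      omega
    · obtain ⟨r, hr⟩ := heven
      have := ih.1 ⟨r, hr⟩
      rw [hr] at this ⊢
      rw [show (r + r) / 2 = r by omega] at this
      rw [show (r + r + 1) / 2 = r by omega]
      omega

lemma exists_walk_length_le (hn : 0 < n) (t : ℕ) (ht : (u.1 ∩ v.1).card ≤ t * k) :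
    ∃ p : (KneserGraph (2 * n + k) n).Walk u v, p.length ≤ 2 * t + 1 := by
  induction t generalizing u with
  | zero =>
    rw [zero_mul, Nat.le_zero, Finset.card_eq_zero, ← Finset.disjoint_iff_inter_eq_empty,
      ← adj_iff hn] at ht
    exact ⟨ht.toWalk, by simp⟩
  | succ t ih =>
    obtain ⟨a, b, hua, hab, hbv⟩ := exists_adj_adj_card_inter_le hn u v
    obtain ⟨q, hq⟩ := ih (u := b) (by rw [add_mul, one_mul] at ht; omega)
    exact ⟨.cons hua (.cons hab q), by simp only [SimpleGraph.Walk.length_cons]; omega⟩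

lemma odd_dist_of_card_inter_le (hn : 0 < n) {t : ℕ} (ht : (u.1 ∩ v.1).card ≤ t * k)
    (htn : 2 * t * k < n) : Odd ((KneserGraph (2 * n + k) n).dist u v) := by
  obtain ⟨p, hp⟩ := exists_walk_length_le hn t ht
  obtain ⟨q, hq⟩ := (SimpleGraph.Walk.reachable p).exists_walk_length_eq_dist
  by_contra hodd
  have hbound := (walk_length_bound q).1 (hq ▸ Nat.not_odd_iff_even.mp hodd)
  have hdist : q.length / 2 ≤ t := by
    have := (SimpleGraph.dist_le p).trans hp
    omega
  have := Nat.mul_le_mul_right k hdist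
  rw [mul_assoc] at htn
  omega

end KneserGraph

lemma exists_mul_bound_of_lt_pInt {n k s : ℕ} (hk : 0 < k) (h : (s : ℤ) < pInt n k) :
    ∃ t : ℕ, s ≤ t * k ∧ 2 * t * k < n := by
  unfold pInt at h
  have hceil := Int.ceil_lt_add_one (((n : ℚ) - 1) / (2 * k))
  set c : ℤ := ⌈((n : ℚ) - 1) / (2 * k)⌉
  have hc1 : 1 ≤ c := by
    by_contra! hc0
    nlinarith
  obtain ⟨t, ht⟩ : ∃ t : ℕ, (t : ℤ) = c - 1 := ⟨(c - 1).toNat, Int.toNat_of_nonneg (by omega)⟩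
  refine ⟨t, by rw [← ht] at h; exact_mod_cast Int.lt_add_one_iff.mp h, ?_⟩
  have hkq : (0 : ℚ) < 2 * k := by positivity
  have htq : (t : ℚ) = c - 1 := by exact_mod_cast ht
  have : (t : ℚ) * (2 * k) < n - 1 := by rw [htq]; exact (lt_div_iff₀ hkq).mp (by linarith)
  exact_mod_cast (show ((2 * t * k : ℕ) : ℚ) < n by push_cast; linarith)

theorem odd_dist_of_small_intersection_general
    (n k : ℕ) (hn : 0 < n) (hk : 0 < k)
    (u v : {s : Finset (Fin (2 * n + k)) // s.card = n})
    (h : ((u.1 ∩ v.1).card : ℤ) < pInt n k) :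
    Odd ((KneserGraph (2 * n + k) n).dist u v) := by
  obtain ⟨t, hst, htn⟩ := exists_mul_bound_of_lt_pInt hk h
  exact KneserGraph.odd_dist_of_card_inter_le hn hst htn

theorem odd_dist_of_small_intersection
    (n k : ℕ) (hn : 0 < n) (hk : 0 < k)
    (u v : {s : Finset (Fin (2 * n + k)) // s.card = n}) (huv : u ≠ v)
    (h : ((u.1 ∩ v.1).card : ℤ) < pInt n k) :
    Odd ((KneserGraph (2 * n + k) n).dist u v) :=
  odd_dist_of_small_intersection_general n k hn hk u v h
end
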